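/- arXiv:2511.16044 — 5 statements merged into one kernel-verified Lean document; each statement's English description precedes it below -/
import Mathlib

section
/- Let intervals $[a_1,b_1],\dots,[a_s,b_s]$ have strictly increasing left endpoints $a_1 < a_2 < \dots < a_s$, and for each $i$ define the coverage set $\mathcal{N}_i = \{j \in [s] : a_j \le a_i \le b_j\}$. Then there exists an assignment $\hat I : [s] \to \mathbb{N}_{\ge 1}$ such that for every $i$, there is a bijection $\rho_i : \mathcal{N}_i \to \{1,\dots,|\mathcal{N}_i|\}$ with $\hat I_j \ge \rho_i(j)$ for all $j \in \mathcal{N}_i$ (Local-Dominance). -/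
/-!
Take `Î_j = |𝒩_j|` and let `ρ_i` rank `𝒩_i` by index. If `j ∈ 𝒩_i`, every `x ∈ 𝒩_i` with
`x ≤ j` satisfies `a_x ≤ a_j ≤ a_i ≤ b_x`, so it also lies in `𝒩_j`; hence `ρ_i(j) ≤ |𝒩_j|`.
-/

open Finset

namespace Finset

variable {ι : Type*} [LinearOrder ι] (s : Finset ι)

theorem strictMonoOn_card_filter_le : StrictMonoOn (fun x => #{y ∈ s | y ≤ x}) s := by
  intro x _ z hz hxz
  refine card_lt_card <| (ssubset_iff_of_subset ?_).mpr ⟨z, mem_filter.mpr ⟨hz, le_rfl⟩, ?_⟩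
  · exact monotone_filter_right _ fun y _ hy => hy.trans hxz.le
  · exact fun h => (mem_filter.mp h).2.not_gt hxz

theorem bijOn_card_filter_le : Set.BijOn (fun x => #{y ∈ s | y ≤ x}) s (Set.Icc 1 #s) := by
  have hmaps : Set.MapsTo (fun x => #{y ∈ s | y ≤ x}) s (Icc 1 #s) := fun x hx =>
    mem_Icc.mpr ⟨card_pos.mpr ⟨x, mem_filter.mpr ⟨hx, le_rfl⟩⟩, card_filter_le s _⟩
  have hinj := (strictMonoOn_card_filter_le s).injOn
  rw [← coe_Icc]
  exact ⟨hmaps, hinj, surjOn_of_injOn_of_card_le _ hmaps hinj (by simp)⟩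

end Finset

section Coverage

variable {ι α : Type*} [Fintype ι] [Preorder α] (a b : ι → α)

/-- The paper's `𝒩_i`. -/
noncomputable def coverage (i : ι) : Finset ι :=
  open Classical in {j | a j ≤ a i ∧ a i ≤ b j}

variable {a b}

theorem mem_coverage {i j : ι} : j ∈ coverage a b i ↔ a j ≤ a i ∧ a i ≤ b j := by
  simp [coverage]

theorem self_mem_coverage (hab : ∀ i, a i ≤ b i) (i : ι) : i ∈ coverage a b i :=
  mem_coverage.mpr ⟨le_rfl, hab i⟩

theorem filter_le_coverage_subset [LinearOrder ι] (ha : Monotone a) {i j : ι}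
    (hj : j ∈ coverage a b i) : {x ∈ coverage a b i | x ≤ j} ⊆ coverage a b j := by
  intro x hx
  obtain ⟨hx, hxj⟩ := mem_filter.mp hx
  exact mem_coverage.mpr ⟨ha hxj, (mem_coverage.mp hj).1.trans (mem_coverage.mp hx).2⟩

end Coverage

/-- Local-Dominance existence for the Interval Assignment Problem. -/
theorem iap_local_dominance
    (s : ℕ) (a b : Fin s → ℝ)
    (hab : ∀ i, a i ≤ b i) (hmono : StrictMono a) :
    ∃ I : Fin s → ℕ, (∀ i, 1 ≤ I i) ∧
      ∀ i : Fin s,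
        ∃ ρ : Fin s → ℕ,
          Set.BijOn ρ {j : Fin s | a j ≤ a i ∧ a i ≤ b j}
            (Set.Icc 1 ({j : Fin s | a j ≤ a i ∧ a i ≤ b j}.ncard)) ∧
          ∀ j ∈ {j : Fin s | a j ≤ a i ∧ a i ≤ b j}, ρ j ≤ I j := by
  refine ⟨fun j => #(coverage a b j), fun i => card_pos.mpr ⟨i, self_mem_coverage hab i⟩,
    fun i => ⟨fun j => #{x ∈ coverage a b i | x ≤ j}, ?_⟩⟩
  have hN : {j : Fin s | a j ≤ a i ∧ a i ≤ b j} = coverage a b i := by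
    ext j
    simp [mem_coverage]
  rw [hN, Set.ncard_coe_finset]
  exact ⟨bijOn_card_filter_le _, fun j hj =>
    card_le_card (filter_le_coverage_subset hmono.monotone hj)⟩
end

section
/- Let $\Psi : [0,1] \to [0,1]$ be non-decreasing and concave with $\Psi(1) = 1$. Let $B \ge 1$ be an integer (the batch size) and let $m \le B$ be a positive integer. Suppose positive integers $\hat I_1, \dots, \hat I_m$ are such that when sorted in increasing order the $k$-th smallest is at least $k$. Then $\Psi(1 - m/B) + \sum_{k=1}^m \left[ \Psi\left(1 - \frac{\hat I_k - 1}{B}\right) - \Psi\left(1 - \frac{\hat I_k}{B}\right) \right] \ge 1$, where we additionally assume $\hat I_k \le B$ for all $k$. -/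
/-!
By concavity of `Ψ`, the marginal difference `Ψ(1 - (j-1)/B) - Ψ(1 - j/B)` is non-decreasing in
`j` on `1 ≤ j ≤ B`. Matching the `k`-th smallest `Î` with `k`, the sum over the `Î_k` therefore
dominates the sum over `j = 1, …, m`, which telescopes to `Ψ 1 - Ψ(1 - m/B) = 1 - Ψ(1 - m/B)`.
-/

open Finset

theorem ConcaveOn.sub_le_sub_of_le {𝕜 : Type*} [Field 𝕜] [LinearOrder 𝕜] [IsStrictOrderedRing 𝕜]
    {s : Set 𝕜} {f : 𝕜 → 𝕜} (hf : ConcaveOn 𝕜 s f) {x y h : 𝕜} (hx : x ∈ s) (hyh : y + h ∈ s)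
    (hh : 0 ≤ h) (hxy : x ≤ y) : f (y + h) - f y ≤ f (x + h) - f x := by
  rcases hh.eq_or_lt with rfl | hh
  · simp
  rcases hxy.eq_or_lt with rfl | hxy
  · rfl
  have hIcc : Set.Icc x (y + h) ⊆ s := hf.1.ordConnected.out hx hyh
  have hxh : x + h ∈ s := hIcc ⟨by linarith, by linarith⟩
  have hy : y ∈ s := hIcc ⟨hxy.le, by linarith⟩
  have hleft : slope f x (y + h) ≤ slope f x (x + h) :=
    hf.slope_anti hx ⟨hxh, (lt_add_of_pos_right x hh).ne'⟩ ⟨hyh, (by linarith : x < y + h).ne'⟩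
      (by linarith)
  have hright : slope f (y + h) y ≤ slope f (y + h) x :=
    hf.slope_anti hyh ⟨hx, (by linarith : x < y + h).ne⟩ ⟨hy, (lt_add_of_pos_right y hh).ne⟩ hxy.le
  rw [slope_comm f (y + h) x] at hright
  simp only [slope_def_field, add_sub_cancel_left, sub_add_cancel_left] at hleft hright
  rw [div_neg, ← neg_div, neg_sub] at hright
  exact (div_le_div_iff_of_pos_right hh).1 (hright.trans hleft)

noncomputable def marginalDiff (Ψ : ℝ → ℝ) (B j : ℕ) : ℝ :=
  Ψ (1 - ((j : ℝ) - 1) / B) - Ψ (1 - (j : ℝ) / B)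

theorem ConcaveOn.monotoneOn_marginalDiff {Ψ : ℝ → ℝ} (hΨ : ConcaveOn ℝ (Set.Icc 0 1) Ψ) (B : ℕ) :
    MonotoneOn (marginalDiff Ψ B) (Set.Icc 1 B) := by
  intro j ⟨hj1, hjB⟩ j' ⟨_, hj'B⟩ hjj'
  have hB : (0 : ℝ) < B := by exact_mod_cast hj1.trans hjB
  have hj1 : (1 : ℝ) ≤ j := by exact_mod_cast hj1
  have hjB : (j : ℝ) ≤ B := by exact_mod_cast hjB
  have hj'B : (j' : ℝ) ≤ B := by exact_mod_cast hj'B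
  have hjj' : (j : ℝ) ≤ j' := by exact_mod_cast hjj'
  have key := hΨ.sub_le_sub_of_le (x := 1 - j' / B) (y := 1 - j / B) (h := 1 / B)
    ⟨by linarith [(div_le_one hB).2 hj'B], by linarith [div_nonneg (Nat.cast_nonneg j') hB.le]⟩
    ⟨by linarith [(div_le_one hB).2 hjB, one_div_nonneg.2 hB.le],
      by linarith [div_le_div_of_nonneg_right hj1 hB.le]⟩ (by positivity) (by gcongr)
  simp only [marginalDiff]
  rwa [show 1 - ((j : ℝ) - 1) / B = 1 - j / B + 1 / B by ring,
    show 1 - ((j' : ℝ) - 1) / B = 1 - j' / B + 1 / B by ring]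

theorem sum_marginalDiff_range (Ψ : ℝ → ℝ) (B m : ℕ) :
    ∑ k ∈ range m, marginalDiff Ψ B (k + 1) = Ψ 1 - Ψ (1 - (m : ℝ) / B) := by
  have := sum_range_sub' (fun j : ℕ => Ψ (1 - (j : ℝ) / B)) m
  simp only [Nat.cast_zero, zero_div, sub_zero] at this
  rw [← this]
  refine sum_congr rfl fun k _ => ?_
  simp [marginalDiff]

theorem sum_le_sum_of_perm_succ_le {M : Type*} [AddCommMonoid M] [PartialOrder M]
    [IsOrderedAddMonoid M] {g : ℕ → M} {B m : ℕ} (hg : MonotoneOn g (Set.Icc 1 B))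
    (I : Fin m → ℕ) (hle : ∀ k, I k ≤ B) (σ : Equiv.Perm (Fin m))
    (hσ : ∀ k : Fin m, (k : ℕ) + 1 ≤ I (σ k)) :
    ∑ k ∈ range m, g (k + 1) ≤ ∑ k, g (I k) := by
  rw [← Equiv.sum_comp σ, ← Fin.sum_univ_eq_sum_range (fun k => g (k + 1))]
  exact sum_le_sum fun k _ =>
    hg ⟨Nat.le_add_left 1 k, (hσ k).trans (hle _)⟩ ⟨(Nat.le_add_left 1 k).trans (hσ k), hle _⟩ (hσ k)

theorem dual_feasibility_general
    (Ψ : ℝ → ℝ)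
    (hconc : ConcaveOn ℝ (Set.Icc 0 1) Ψ)
    (hone : Ψ 1 = 1)
    (B m : ℕ)
    (I : Fin m → ℕ) (hle : ∀ k, I k ≤ B)
    (hsorted : ∃ σ : Equiv.Perm (Fin m), ∀ k : Fin m, (k : ℕ) + 1 ≤ I (σ k)) :
    1 ≤ Ψ (1 - (m : ℝ) / B) +
      ∑ k : Fin m, (Ψ (1 - ((I k : ℝ) - 1) / B) - Ψ (1 - (I k : ℝ) / B)) := by
  obtain ⟨σ, hσ⟩ := hsorted
  calc 1 = Ψ (1 - (m : ℝ) / B) + ∑ k ∈ range m, marginalDiff Ψ B (k + 1) := by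
        rw [sum_marginalDiff_range, hone]; ring
    _ ≤ Ψ (1 - (m : ℝ) / B) + ∑ k, marginalDiff Ψ B (I k) := by
        gcongr
        exact sum_le_sum_of_perm_succ_le (hconc.monotoneOn_marginalDiff B) I hle σ hσ

/-- key dual-feasibility inequality. -/
theorem dual_feasibility
    (Ψ : ℝ → ℝ)
    (hmono : MonotoneOn Ψ (Set.Icc 0 1))
    (hconc : ConcaveOn ℝ (Set.Icc 0 1) Ψ)
    (hmaps : ∀ x ∈ Set.Icc (0:ℝ) 1, Ψ x ∈ Set.Icc (0:ℝ) 1)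
    (hone : Ψ 1 = 1)
    (B m : ℕ) (hB : 1 ≤ B) (hm : 1 ≤ m) (hmB : m ≤ B)
    (I : Fin m → ℕ) (hpos : ∀ k, 1 ≤ I k) (hle : ∀ k, I k ≤ B)
    (hsorted : ∃ σ : Equiv.Perm (Fin m), ∀ k : Fin m, (k : ℕ) + 1 ≤ I (σ k)) :
    1 ≤ Ψ (1 - (m : ℝ) / B) +
      ∑ k : Fin m, (Ψ (1 - ((I k : ℝ) - 1) / B) - Ψ (1 - (I k : ℝ) / B)) :=
  dual_feasibility_general Ψ hconc hone B m I hle hsorted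
end

section
/- Let $\Psi(x) = \frac{e^{1-x} - e}{1 - e}$ for $x \in [0,1]$. Then $\Psi$ is non-decreasing, concave, $\Psi(0) = 0$, $\Psi(1) = 1$, and $\min_{x \in [0,1]} \frac{1 - x}{(1 - \Psi(x)) + \int_x^1 \Psi(y)\, dy} = 1 - \frac{1}{e}$. -/
/-- properties of the exponential penalty function and the asymptotic
competitive ratio `1 - 1/e`: with `Ψ(x) = (e^{1-x} - e)/(1 - e)`, the penalty is
non-decreasing, concave, `Ψ(0) = 0`, `Ψ(1) = 1`, the ratio
`(1-x)/((1-Ψ(x)) + ∫_x^1 Ψ)` is identically `1 - 1/e` on `[0,1)`, and hence its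
minimum over `[0,1)` equals `1 - 1/e`. -/
theorem exponential_penalty_ratio :
    let Ψ : ℝ → ℝ := fun x => (Real.exp (1 - x) - Real.exp 1) / (1 - Real.exp 1)
    MonotoneOn Ψ (Set.Icc 0 1) ∧
    ConcaveOn ℝ (Set.Icc 0 1) Ψ ∧
    Ψ 0 = 0 ∧ Ψ 1 = 1 ∧
    (∀ x ∈ Set.Ico (0:ℝ) 1,
      (1 - x) / ((1 - Ψ x) + ∫ y in x..1, Ψ y) = 1 - 1 / Real.exp 1) ∧
    IsLeast ((fun x => (1 - x) / ((1 - Ψ x) + ∫ y in x..1, Ψ y)) ''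
      Set.Ico (0:ℝ) 1) (1 - 1 / Real.exp 1) := by
  intro Ψ
  have he1 : (1:ℝ) < Real.exp 1 := by
    have := Real.add_one_le_exp (1:ℝ); linarith
  have hneg : (1:ℝ) - Real.exp 1 < 0 := by linarith
  have hne : (1:ℝ) - Real.exp 1 ≠ 0 := ne_of_lt hneg
  have hepos : (0:ℝ) < Real.exp 1 := Real.exp_pos 1
  -- monotone
  have hmono : MonotoneOn Ψ (Set.Icc 0 1) := by
    intro x _ y _ hxy
    show (Real.exp (1 - x) - Real.exp 1) / (1 - Real.exp 1) ≤
      (Real.exp (1 - y) - Real.exp 1) / (1 - Real.exp 1)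
    rw [div_le_div_right_of_neg hneg]
    have : Real.exp (1 - y) ≤ Real.exp (1 - x) := Real.exp_le_exp.mpr (by linarith)
    linarith
  -- concave
  have hd1 : ∀ x : ℝ, HasDerivAt Ψ (-Real.exp (1 - x) / (1 - Real.exp 1)) x := by
    intro x
    have h : HasDerivAt (fun x : ℝ => 1 - x) (-1) x := (hasDerivAt_id x).const_sub 1
    have := ((h.exp.sub_const (Real.exp 1)).div_const (1 - Real.exp 1))
    simpa using this.congr_deriv (by ring)
  have hderiv : deriv Ψ = fun x => -Real.exp (1 - x) / (1 - Real.exp 1) :=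
    funext fun x => (hd1 x).deriv
  have hd2 : ∀ x : ℝ, HasDerivAt (fun x : ℝ => -Real.exp (1 - x) / (1 - Real.exp 1))
      (Real.exp (1 - x) / (1 - Real.exp 1)) x := by
    intro x
    have h : HasDerivAt (fun x : ℝ => 1 - x) (-1) x := (hasDerivAt_id x).const_sub 1
    have := (h.exp.neg.div_const (1 - Real.exp 1))
    simpa using this.congr_deriv (by ring)
  have hconc : ConcaveOn ℝ (Set.Icc 0 1) Ψ := by
    apply concaveOn_of_deriv2_nonpos' (convex_Icc 0 1)
    · exact fun x _ => (hd1 x).differentiableAt.differentiableWithinAt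
    · intro x _
      rw [hderiv]
      exact (hd2 x).differentiableAt.differentiableWithinAt
    · intro x _
      have : deriv^[2] Ψ x = Real.exp (1 - x) / (1 - Real.exp 1) := by
        show deriv (deriv Ψ) x = _
        rw [hderiv]
        exact (hd2 x).deriv
      rw [this]
      apply div_nonpos_of_nonneg_of_nonpos (Real.exp_pos _).le (le_of_lt hneg)
  -- endpoint values
  have h0 : Ψ 0 = 0 := by
    show (Real.exp (1 - 0) - Real.exp 1) / (1 - Real.exp 1) = 0
    simp
  have h1 : Ψ 1 = 1 := by
    show (Real.exp (1 - 1) - Real.exp 1) / (1 - Real.exp 1) = 1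
    simp [div_self hne]
  -- integral
  have hint : ∀ x : ℝ, (∫ y in x..1, Ψ y)
      = ((Real.exp (1 - x) - 1) - Real.exp 1 * (1 - x)) / (1 - Real.exp 1) := by
    intro x
    have hcont : Continuous fun y : ℝ => Real.exp (1 - y) :=
      Real.continuous_exp.comp (continuous_const.sub continuous_id)
    have hI : (∫ y in x..1, Real.exp (1 - y)) = Real.exp (1 - x) - 1 := by
      rw [intervalIntegral.integral_comp_sub_left (fun u => Real.exp u) 1]
      simp [integral_exp]
    show (∫ y in x..1, (Real.exp (1 - y) - Real.exp 1) / (1 - Real.exp 1)) = _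
    rw [intervalIntegral.integral_div,
      intervalIntegral.integral_sub (hcont.intervalIntegrable x 1)
        (intervalIntegrable_const), hI]
    simp [mul_comm]
  -- ratio formula
  have hratio : ∀ x ∈ Set.Ico (0:ℝ) 1,
      (1 - x) / ((1 - Ψ x) + ∫ y in x..1, Ψ y) = 1 - 1 / Real.exp 1 := by
    intro x hx
    have hx1 : (1:ℝ) - x > 0 := by linarith [hx.2]
    have hden : (1 - Ψ x) + (∫ y in x..1, Ψ y) = Real.exp 1 * (1 - x) / (Real.exp 1 - 1) := by
      show (1 - (Real.exp (1 - x) - Real.exp 1) / (1 - Real.exp 1)) + _ = _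
      rw [hint x]
      have h2 : Real.exp 1 - 1 ≠ 0 := by linarith
      field_simp
      ring
    rw [hden, div_div_eq_mul_div, div_eq_iff (by positivity)]
    field_simp
  refine ⟨hmono, hconc, h0, h1, hratio, ⟨⟨0, by simp, hratio 0 (by simp)⟩, ?_⟩⟩
  rintro v ⟨x, hx, rfl⟩
  exact le_of_eq (hratio x hx).symm
end

section
/- For any non-decreasing concave $\Psi : [0,1] \to [0,1]$ with $\Psi(0)=0$, $\Psi(1)=1$, and any $c \ge 1$, $\gamma \ge 1$ with $\gamma \le c$, the quantity $\Gamma_2(\Psi,\gamma) = \min_{x \in [0, 1 - 1/\gamma]} \frac{1-x}{\frac{1}{\gamma} + 1 - \Psi(x) + \int_{x + 1/\gamma}^1 \Psi(y)\, dy}$ satisfies $\Gamma_2(\Psi,\gamma) \le 1$ and, for $\Psi(x) = \frac{e^{1-x}-e}{1-e}$, $\Gamma_2(\Psi,\gamma) \ge 1 - \frac{1}{e} - \frac{2}{\gamma}$. -/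
set_option maxHeartbeats 1000000 in
/-- bounds on the competitive-ratio expression `Γ₂(Ψ,γ)`: for any
non-decreasing concave penalty `Ψ` with `Ψ(0)=0, Ψ(1)=1` and any `c ≥ 1`, `γ ≥ 1`
with `γ ≤ c`, the quantity `Γ₂(Ψ,γ)` is at most `1`; and for the exponential penalty
`Ψ(x) = (e^{1-x}-e)/(1-e)` it is at least `1 - 1/e - 2/γ`. -/
theorem gamma_two_bounds
    (Ψ : ℝ → ℝ)
    (hmono : MonotoneOn Ψ (Set.Icc 0 1))
    (hconc : ConcaveOn ℝ (Set.Icc 0 1) Ψ)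
    (h0 : Ψ 0 = 0) (h1 : Ψ 1 = 1)
    (hmaps : ∀ x ∈ Set.Icc (0:ℝ) 1, Ψ x ∈ Set.Icc (0:ℝ) 1)
    (c γ : ℝ) (hc : 1 ≤ c) (hγ : 1 ≤ γ) (hγc : γ ≤ c) :
    sInf ((fun x => (1 - x) /
        (1 / γ + 1 - Ψ x + ∫ y in (x + 1 / γ)..1, Ψ y)) ''
      Set.Icc (0:ℝ) (1 - 1 / γ)) ≤ 1 ∧
    1 - 1 / Real.exp 1 - 2 / γ ≤
      sInf ((fun x => (1 - x) /
          (1 / γ + 1 - (Real.exp (1 - x) - Real.exp 1) / (1 - Real.exp 1) +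
            ∫ y in (x + 1 / γ)..1,
              (Real.exp (1 - y) - Real.exp 1) / (1 - Real.exp 1))) ''
        Set.Icc (0:ℝ) (1 - 1 / γ)) := by
  have hγ0 : (0:ℝ) < γ := lt_of_lt_of_le one_pos hγ
  have hs0 : (0:ℝ) < 1/γ := by positivity
  have hs1 : 1/γ ≤ 1 := by rw [div_le_one hγ0]; exact hγ
  have he : (1:ℝ) < Real.exp 1 := by
    have := Real.add_one_le_exp 1; linarith
  constructor
  · -- upper bound
    have h0mem : (0:ℝ) ∈ Set.Icc (0:ℝ) (1 - 1/γ) := by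
      constructor <;> linarith
    have hbdd : BddBelow ((fun x => (1 - x) /
        (1 / γ + 1 - Ψ x + ∫ y in (x + 1 / γ)..1, Ψ y)) ''
      Set.Icc (0:ℝ) (1 - 1 / γ)) := by
      refine ⟨0, ?_⟩
      rintro v ⟨x, hx, rfl⟩
      obtain ⟨hx0, hx1⟩ := hx
      have hΨx := hmaps x ⟨hx0, by linarith⟩
      have hintnn : 0 ≤ ∫ y in (x + 1/γ)..1, Ψ y := by
        apply intervalIntegral.integral_nonneg (by linarith)
        intro u hu
        exact (hmaps u ⟨by linarith [hu.1], hu.2⟩).1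
      have : 0 ≤ 1/γ + 1 - Ψ x + ∫ y in (x + 1/γ)..1, Ψ y := by
        have := hΨx.2; linarith
      exact div_nonneg (by linarith) this
    calc sInf _ ≤ (1 - 0) / (1 / γ + 1 - Ψ 0 + ∫ y in ((0:ℝ) + 1 / γ)..1, Ψ y) :=
          csInf_le hbdd ⟨0, h0mem, rfl⟩
      _ ≤ 1 := by
          rw [h0]
          have hintnn : 0 ≤ ∫ y in ((0:ℝ) + 1/γ)..1, Ψ y := by
            apply intervalIntegral.integral_nonneg (by linarith)
            intro u hu
            exact (hmaps u ⟨by linarith [hu.1], hu.2⟩).1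
          rw [div_le_one (by linarith)]
          linarith
  · -- lower bound
    set E := Real.exp 1 with hE
    have hE0 : (0:ℝ) < E := by linarith
    have h1E : (1:ℝ) - E ≠ 0 := by linarith
    clear_value E
    -- exact integral
    have hint : ∀ a b : ℝ, (∫ y in a..b, (Real.exp (1-y) - E)/(1 - E)) =
        ((Real.exp (1-b) * (-1) - E * b) - (Real.exp (1-a) * (-1) - E * a))/(1 - E) := by
      intro a b
      have hd : ∀ y ∈ Set.uIcc a b,
          HasDerivAt (fun y => (Real.exp (1-y) * (-1) - E * y)/(1 - E))
            ((Real.exp (1-y) - E)/(1 - E)) y := by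
        intro y _
        have h1 : HasDerivAt (fun y : ℝ => 1 - y) (-1) y := by
          simpa using (hasDerivAt_const y (1:ℝ)).fun_sub (hasDerivAt_id y)
        have h2 : HasDerivAt (fun y => Real.exp (1-y)) (Real.exp (1-y) * (-1)) y :=
          (Real.hasDerivAt_exp (1-y)).comp y h1
        have h3 : HasDerivAt (fun y => Real.exp (1-y) * (-1) - E * y)
            (Real.exp (1-y) * (-1) * (-1) - E) y := by
          simpa using (h2.mul_const (-1)).fun_sub ((hasDerivAt_id y).const_mul E)
        have h4 := h3.div_const (1 - E)
        rw [show (Real.exp (1-y) - E)/(1 - E) = (Real.exp (1-y) * (-1) * (-1) - E)/(1 - E) by ring]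
        exact h4
      rw [intervalIntegral.integral_eq_sub_of_hasDerivAt hd
        (Continuous.intervalIntegrable (by continuity) a b)]
      exact div_sub_div_same _ _ _
    have hne : ((fun x => (1 - x) /
          (1 / γ + 1 - (Real.exp (1 - x) - E) / (1 - E) +
            ∫ y in (x + 1 / γ)..1, (Real.exp (1 - y) - E) / (1 - E))) ''
        Set.Icc (0:ℝ) (1 - 1 / γ)).Nonempty :=
      ⟨_, ⟨0, ⟨le_refl _, by linarith⟩, rfl⟩⟩
    apply le_csInf hne
    rintro v ⟨x, ⟨hx0, hx1⟩, rfl⟩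
    simp only
    rw [hint]
    set s := 1/γ with hsdef
    clear_value s
    set u := Real.exp (1 - x) with hu
    set w := Real.exp (1 - (x + s)) with hw
    clear_value u w
    have hu1 : 1 ≤ u := by rw [hu]; exact Real.one_le_exp (by linarith)
    have huE : u ≤ E := by
      rw [hu, hE]; exact Real.exp_le_exp.2 (by linarith)
    have hwu : w = u * Real.exp (-s) := by
      rw [hw, hu, ← Real.exp_add]; ring_nf
    have hews : 1 - s ≤ Real.exp (-s) := by
      have := Real.add_one_le_exp (-s); linarith
    have hews1 : Real.exp (-s) ≤ 1 := Real.exp_le_one_iff.2 (by linarith)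
    have hEm1 : (0:ℝ) < E - 1 := by linarith
    -- chord: u ≤ x + E*(1-x)
    have hchord : u ≤ x + E * (1 - x) := by
      have hcv := convexOn_exp.2 (Set.mem_univ (-1:ℝ)) (Set.mem_univ (0:ℝ))
        hx0 (by linarith : (0:ℝ) ≤ 1 - x) (by ring)
      simp only [smul_eq_mul, mul_neg, mul_one, mul_zero, add_zero, Real.exp_zero] at hcv
      have hxx : Real.exp (-x) ≤ x * Real.exp (-1) + (1 - x) := by linarith [hcv]
      have hmul : E * Real.exp (-x) ≤ E * (x * Real.exp (-1) + (1 - x)) :=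
        mul_le_mul_of_nonneg_left hxx hE0.le
      have h1' : E * Real.exp (-x) = u := by
        rw [hu, hE, ← Real.exp_add]; ring_nf
      have h2' : E * Real.exp (-1) = 1 := by
        rw [hE, ← Real.exp_add]; simp
      nlinarith [hmul]
    -- denominator rewrite
    have hDeq : s + 1 - (u - E) / (1 - E) +
        ((Real.exp (1 - 1) * (-1) - E * 1) - (w * (-1) - E * (x + s)))/(1 - E)
        = s + (u * (1 - Real.exp (-s)) + E * (1 - x) - E * s)/(E - 1) := by
      rw [show (1:ℝ) - 1 = 0 by ring, Real.exp_zero, hwu]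
      field_simp [h1E, hEm1.ne']
      ring
    rw [hDeq]
    clear hne hint hmono hconc hmaps h0 h1
    have hP : 0 ≤ u * (1 - Real.exp (-s)) + E * (1 - x) - E * s := by
      nlinarith [hews1, hu1, hE0]
    have hD0 : 0 < s + (u * (1 - Real.exp (-s)) + E * (1 - x) - E * s)/(E - 1) := by
      have : 0 ≤ (u * (1 - Real.exp (-s)) + E * (1 - x) - E * s)/(E - 1) :=
        div_nonneg hP hEm1.le
      linarith
    rw [le_div_iff₀ hD0]
    set D := s + (u * (1 - Real.exp (-s)) + E * (1 - x) - E * s)/(E - 1) with hDdef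
    clear_value D
    have h2s : 2/γ = 2 * s := by rw [hsdef]; ring
    rw [h2s]
    rcases le_or_gt (1 - 1/E - 2*s) 0 with hr | hr
    · have : (1 - 1/E - 2*s) * D ≤ 0 := mul_nonpos_of_nonpos_of_nonneg hr hD0.le
      linarith
    · set Dbar := s + (u * s + E * (1 - x) - E * s)/(E - 1) with hDbardef
      clear_value Dbar
      have hDbar : D ≤ Dbar := by
        rw [hDdef, hDbardef]
        have hnum : u * (1 - Real.exp (-s)) ≤ u * s := by nlinarith [hews, hu1]
        exact add_le_add_right ((div_le_div_iff_of_pos_right hEm1).mpr (by linarith)) s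
      have hDlow : E * (1 - x) ≤ Dbar * (E - 1) := by
        have hexp : Dbar * (E - 1) = s * (E - 1) + (u * s + E * (1 - x) - E * s) := by
          rw [hDbardef, add_mul, div_mul_cancel₀ _ hEm1.ne']
        rw [hexp]
        nlinarith [mul_nonneg hs0.le (sub_nonneg.2 hu1)]
      have h2E : u - 1 ≤ 2 * E * Dbar := by
        nlinarith [mul_le_mul_of_nonneg_left hDlow (by linarith : (0:ℝ) ≤ 2*E),
          mul_le_mul_of_nonneg_right hchord hEm1.le,
          mul_nonneg (by linarith : (0:ℝ) ≤ 1-x) (by nlinarith : (0:ℝ) ≤ E^2 + 2*E - 1),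
          hEm1]
      have hid : (1 - 1/E - 2*s) * Dbar = (1 - x) + s*(u - 1 - 2*E*Dbar)/E := by
        rw [hDbardef]
        field_simp [hE0.ne', hEm1.ne']
        ring
      have hkey : (1 - 1/E - 2*s) * Dbar ≤ 1 - x := by
        rw [hid]
        have : s*(u - 1 - 2*E*Dbar)/E ≤ 0 :=
          div_nonpos_of_nonpos_of_nonneg
            (mul_nonpos_of_nonneg_of_nonpos hs0.le (by linarith)) hE0.le
        linarith
      calc (1 - 1/E - 2*s) * D ≤ (1 - 1/E - 2*s) * Dbar :=
            mul_le_mul_of_nonneg_left hDbar hr.le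
        _ ≤ 1 - x := hkey
end

section
/- Suppose $\hat I : [s] \to \mathbb{N}_{\ge 1}$ and there is a function $p : [s] \to [s] \cup \{\bot\}$ such that: (a) $p(i) = \bot$ if and only if $\hat I_i = 1$; (b) if $p(i) = j \ne \bot$ then $\hat I_j = \hat I_i - 1$; and (c) $p$ is injective on $\{i : p(i) \ne \bot\}$, i.e., each $j$ is the predecessor of at most one index. Then $[s]$ can be partitioned into disjoint nonempty subsets $A_1, \dots, A_\kappa$ such that for each $\ell$, $\{\hat I_i : i \in A_\ell\} = \{1, 2, \dots, |A_\ell|\}$. -/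
/-- Follow predecessor links for at most `n` steps. -/
def chainAux {s : ℕ} (p : Fin s → Option (Fin s)) : ℕ → Fin s → Fin s
  | 0, i => i
  | n+1, i => match p i with
    | none => i
    | some j => chainAux p n j

section lemmas

variable {s : ℕ} {I : Fin s → ℕ} {p : Fin s → Option (Fin s)}
variable (hI : ∀ i, 1 ≤ I i) (ha : ∀ i, p i = none ↔ I i = 1)
variable (hb : ∀ i j, p i = some j → I j + 1 = I i)

lemma chainAux_succ_none {n : ℕ} {i : Fin s} (h : p i = none) :
    chainAux p (n+1) i = i := by
  simp [chainAux, h]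

lemma chainAux_succ_some {n : ℕ} {i j : Fin s} (h : p i = some j) :
    chainAux p (n+1) i = chainAux p n j := by
  simp [chainAux, h]

include hI hb in
lemma chainAux_stable : ∀ n (i : Fin s), I i ≤ n → chainAux p (n+1) i = chainAux p n i := by
  intro n
  induction n with
  | zero => intro i h; exact absurd (le_trans (hI i) h) (by simp)
  | succ n ih =>
    intro i h
    cases hp : p i with
    | none => rw [chainAux_succ_none hp, chainAux_succ_none hp]
    | some j =>
      rw [chainAux_succ_some hp, chainAux_succ_some hp]
      exact ih j (by have := hb i j hp; omega)

include hI hb in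
lemma chainAux_ge : ∀ n (i : Fin s), I i ≤ n → chainAux p n i = chainAux p (I i) i := by
  intro n
  induction n with
  | zero => intro i h; exact absurd (le_trans (hI i) h) (by simp)
  | succ n ih =>
    intro i h
    rcases Nat.lt_or_ge (I i) (n+1) with hlt | hge
    · rw [chainAux_stable hI hb n i (by omega)]
      exact ih i (by omega)
    · have : I i = n + 1 := le_antisymm h hge
      rw [this]

/-- The root of the chain containing `i`. -/
noncomputable def chainRoot (I : Fin s → ℕ) (p : Fin s → Option (Fin s)) (i : Fin s) : Fin s :=
  chainAux p (I i) i

include hI in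
lemma chainRoot_of_none {i : Fin s} (h : p i = none) : chainRoot I p i = i := by
  unfold chainRoot
  obtain ⟨k, hk⟩ : ∃ k, I i = k + 1 := ⟨I i - 1, by have := hI i; omega⟩
  rw [hk, chainAux_succ_none h]

include hI hb in
lemma chainRoot_step {i j : Fin s} (h : p i = some j) : chainRoot I p i = chainRoot I p j := by
  unfold chainRoot
  have hij := hb i j h
  obtain ⟨k, hk⟩ : ∃ k, I i = k + 1 := ⟨I i - 1, by have := hI i; omega⟩
  rw [hk, chainAux_succ_some h, chainAux_ge hI hb k j (by omega)]

include hI hb in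
lemma chainRoot_isRoot : ∀ n (i : Fin s), I i ≤ n → p (chainRoot I p i) = none := by
  intro n
  induction n with
  | zero => intro i h; exact absurd (le_trans (hI i) h) (by simp)
  | succ n ih =>
    intro i h
    cases hp : p i with
    | none => rw [chainRoot_of_none hI hp]; exact hp
    | some j =>
      rw [chainRoot_step hI hb hp]
      exact ih j (by have := hb i j hp; omega)

include hI ha hb in
lemma chain_inj (hc : ∀ i i' j, p i = some j → p i' = some j → i = i') :
    ∀ n (i i' : Fin s), I i ≤ n → chainRoot I p i = chainRoot I p i' → I i = I i' → i = i' := by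
  intro n
  induction n with
  | zero => intro i _ h; exact absurd (le_trans (hI i) h) (by simp)
  | succ n ih =>
    intro i i' h hroot hval
    by_cases h1 : I i = 1
    · have hpi : p i = none := (ha i).mpr h1
      have hpi' : p i' = none := (ha i').mpr (hval ▸ h1)
      rw [chainRoot_of_none hI hpi, chainRoot_of_none hI hpi'] at hroot
      exact hroot
    · have hpi : p i ≠ none := fun hn => h1 ((ha i).mp hn)
      have hpi' : p i' ≠ none := fun hn => h1 (hval ▸ (ha i').mp hn)
      obtain ⟨j, hj⟩ := Option.ne_none_iff_exists'.mp hpi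
      obtain ⟨j', hj'⟩ := Option.ne_none_iff_exists'.mp hpi'
      have hIj := hb i j hj
      have hIj' := hb i' j' hj'
      have : j = j' := by
        apply ih j j' (by omega)
        · rw [← chainRoot_step hI hb hj, ← chainRoot_step hI hb hj', hroot]
        · omega
      subst this
      exact hc i i' j hj hj'

include hI ha hb in
lemma chain_down :
    ∀ n (i : Fin s) (k : ℕ), I i ≤ n → 1 ≤ k → k ≤ I i →
      ∃ j, chainRoot I p j = chainRoot I p i ∧ I j = k := by
  intro n
  induction n with
  | zero => intro i _ h; exact absurd (le_trans (hI i) h) (by simp)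
  | succ n ih =>
    intro i k h hk1 hki
    rcases eq_or_lt_of_le hki with he | hlt
    · exact ⟨i, rfl, he.symm⟩
    · have h1 : I i ≠ 1 := by omega
      have hpi : p i ≠ none := fun hn => h1 ((ha i).mp hn)
      obtain ⟨j, hj⟩ := Option.ne_none_iff_exists'.mp hpi
      have hIj := hb i j hj
      obtain ⟨j', hr, hv⟩ := ih j k (by omega) hk1 (by omega)
      exact ⟨j', by rw [hr, chainRoot_step hI hb hj], hv⟩

end lemmas

/-- predecessor links yield a Partition-Monotonicity partition. -/
theorem predecessor_links_give_partition
    (s : ℕ) (I : Fin s → ℕ) (hI : ∀ i, 1 ≤ I i)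
    (p : Fin s → Option (Fin s))
    (ha : ∀ i, p i = none ↔ I i = 1)
    (hb : ∀ i j, p i = some j → I j + 1 = I i)
    (hc : ∀ i i' j, p i = some j → p i' = some j → i = i') :
    ∃ (κ : ℕ) (A : Fin κ → Finset (Fin s)),
      (∀ ℓ, (A ℓ).Nonempty) ∧
      (∀ ℓ ℓ', ℓ ≠ ℓ' → Disjoint (A ℓ) (A ℓ')) ∧
      (∀ i : Fin s, ∃ ℓ, i ∈ A ℓ) ∧
      (∀ ℓ, Multiset.map I (A ℓ).val = (Finset.Icc 1 (A ℓ).card).val) := by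
  classical
  set R : Finset (Fin s) := Finset.univ.filter (fun r => p r = none) with hR
  refine ⟨R.card, fun ℓ => Finset.univ.filter (fun i => chainRoot I p i = (R.equivFin.symm ℓ : Fin s)), ?_, ?_, ?_, ?_⟩
  · -- nonempty
    intro ℓ
    refine ⟨(R.equivFin.symm ℓ : Fin s), ?_⟩
    have hmem := Finset.mem_filter.mp (R.equivFin.symm ℓ).2
    simp only [Finset.mem_filter, Finset.mem_univ, true_and]
    exact chainRoot_of_none hI hmem.2
  · -- disjoint
    intro ℓ ℓ' hne
    rw [Finset.disjoint_left]
    intro i hi hi'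
    simp only [Finset.mem_filter, Finset.mem_univ, true_and] at hi hi'
    apply hne
    apply R.equivFin.symm.injective
    exact Subtype.ext (hi ▸ hi')
  · -- cover
    intro i
    have hroot : p (chainRoot I p i) = none := chainRoot_isRoot hI hb (I i) i le_rfl
    have hmem : chainRoot I p i ∈ R := Finset.mem_filter.mpr ⟨Finset.mem_univ _, hroot⟩
    refine ⟨R.equivFin ⟨_, hmem⟩, ?_⟩
    simp only [Finset.mem_filter, Finset.mem_univ, true_and, Equiv.symm_apply_apply]
  · -- values
    intro ℓ
    set r : Fin s := (R.equivFin.symm ℓ : Fin s) with hr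
    set A : Finset (Fin s) := Finset.univ.filter (fun i => chainRoot I p i = r) with hA
    have hrR : r ∈ R := (R.equivFin.symm ℓ).2
    have hrnone : p r = none := (Finset.mem_filter.mp hrR).2
    have hrA : r ∈ A := by
      simp only [hA, Finset.mem_filter, Finset.mem_univ, true_and]
      exact chainRoot_of_none hI hrnone
    have hinj : Set.InjOn I (A : Set (Fin s)) := by
      intro i hi i' hi' hval
      simp only [hA, Finset.coe_filter, Set.mem_setOf_eq] at hi hi'
      exact chain_inj hI ha hb hc (I i) i i' le_rfl (hi.2.trans hi'.2.symm) hval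
    -- the image
    have hne : (A.image I).Nonempty := ⟨I r, Finset.mem_image_of_mem I hrA⟩
    set M : ℕ := (A.image I).max' hne with hM
    obtain ⟨imax, himax, hImax⟩ := Finset.mem_image.mp ((A.image I).max'_mem hne)
    have himg : A.image I = Finset.Icc 1 M := by
      apply Finset.Subset.antisymm
      · intro k hk
        obtain ⟨j, hjA, hjk⟩ := Finset.mem_image.mp hk
        rw [Finset.mem_Icc]
        exact ⟨hjk ▸ hI j, Finset.le_max' _ _ hk⟩
      · intro k hk
        rw [Finset.mem_Icc] at hk
        rw [hA, Finset.mem_filter] at himax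

        obtain ⟨j, hjr, hjk⟩ := chain_down hI ha hb (I imax) imax k le_rfl hk.1 (by omega)
        refine Finset.mem_image.mpr ⟨j, ?_, hjk⟩
        simp only [hA, Finset.mem_filter, Finset.mem_univ, true_and]
        rw [hjr, himax.2]
    have hcard : A.card = M := by
      have h1 : (A.image I).card = A.card := Finset.card_image_of_injOn hinj
      rw [himg] at h1
      simpa using h1.symm
    have hval : (A.image I).val = Multiset.map I A.val := Finset.image_val_of_injOn hinj
    rw [← hval, himg, hcard]
end
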